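/- (Theorem 4 of the paper, restated for the explicit cost function.) For every integer δ ≥ 1, the minimum of F over the integers k ≥ δ is attained at k_UB = max{δ, ⌈σ⌉}; that is, F(max{δ, ⌈σ⌉}) ≤ F(k) for every integer k ≥ δ. -/

import Mathlib

/-!
With `a = 1 - B` and `D k = B + k a`, the forward difference of the cost is
`F (k + 1) - F k = a q(k) / (D k D (k + 1))` for the quadratic `q(x) = a x²/2 + (1 + B) x/2 - E`,
whose larger root is `σ`. Both roots are real since `E > 0`, and the smaller one lies below `1/2`,
so for `k ≥ 1` the difference has the sign of `k - σ`: `F` decreases up to `⌈σ⌉` and increases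
from there on. Its minimum over `k ≥ δ` is therefore attained at `max δ ⌈σ⌉`.
-/

open Set

theorem Int.apply_max_ceil_le {β : Type*} [Preorder β] {f : ℤ → β} {a : ℤ} {σ : ℝ}
    (hdown : ∀ j, a ≤ j → (j : ℝ) < σ → f (j + 1) ≤ f j)
    (hup : ∀ j, a ≤ j → σ ≤ j → f j ≤ f (j + 1)) {δ k : ℤ} (hδ : a ≤ δ) (hk : δ ≤ k) :
    f (max δ ⌈σ⌉) ≤ f k := by
  have hanti : AntitoneOn f (Icc a ⌈σ⌉) :=
    antitoneOn_of_add_one_le ordConnected_Icc fun j _ hj hj1 =>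
      hdown j hj.1 (Int.lt_ceil.1 (Int.add_one_le_iff.1 hj1.2))
  have hmono : MonotoneOn f (Ici (max a ⌈σ⌉)) :=
    monotoneOn_of_le_add_one ordConnected_Ici fun j _ hj _ =>
      hup j (le_of_max_le_left hj) (Int.ceil_le.1 (le_of_max_le_right hj))
  rcases le_or_gt (max δ ⌈σ⌉) k with hmk | hkm
  · exact hmono (by simp only [mem_Ici]; omega) (by simp only [mem_Ici]; omega) hmk
  · have hkσ : k < ⌈σ⌉ := by omega
    rw [max_eq_right (hk.trans hkσ.le)]
    exact hanti ⟨hδ.trans hk, hkσ.le⟩ ⟨by omega, le_rfl⟩ hkσ.le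

noncomputable section

def avgCost (B E x : ℝ) : ℝ :=
  ((1 - B) / (B + x * (1 - B))) * (x * (x - 1) / 2 + (E + x) / (1 - B) + B / (1 - B) ^ 2)

def avgCostDiffNum (B E x : ℝ) : ℝ :=
  (1 - B) / 2 * x ^ 2 + (1 + B) / 2 * x - E

def costDiscr (B E : ℝ) : ℝ :=
  B ^ 2 / (1 - B) ^ 2 + (B + 2 * E) / (1 - B) + 1 / 4

def costRoot (B E : ℝ) : ℝ :=
  -(1 + B) / (2 * (1 - B)) + Real.sqrt (costDiscr B E)

end

variable {B E x : ℝ}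

theorem avgCost_add_one_sub (hB : B ≠ 1) (hx : B + x * (1 - B) ≠ 0)
    (hx1 : B + (x + 1) * (1 - B) ≠ 0) :
    avgCost B E (x + 1) - avgCost B E x =
      (1 - B) * avgCostDiffNum B E x / ((B + x * (1 - B)) * (B + (x + 1) * (1 - B))) := by
  have : 1 - B ≠ 0 := sub_ne_zero.2 (Ne.symm hB)
  rw [avgCost, avgCost, avgCostDiffNum, div_mul_eq_mul_div, div_mul_eq_mul_div,
    div_sub_div _ _ hx1 hx, div_eq_div_iff (mul_ne_zero hx1 hx) (mul_ne_zero hx hx1)]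
  field_simp
  ring

theorem costDiscr_nonneg (hB : B < 1) (hE : 0 ≤ E) : 0 ≤ costDiscr B E := by
  have ha : 0 < 1 - B := sub_pos.2 hB
  have : costDiscr B E = ((1 + B) / (2 * (1 - B))) ^ 2 + 2 * E / (1 - B) := by
    unfold costDiscr
    field_simp
    ring
  rw [this]
  positivity

theorem avgCostDiffNum_eq_mul (hB : B < 1) (hE : 0 ≤ E) (x : ℝ) :
    avgCostDiffNum B E x = (1 - B) / 2 * (x - costRoot B E) *
      (x + (1 + B) / (2 * (1 - B)) + Real.sqrt (costDiscr B E)) := by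
  have ha : 0 < 1 - B := sub_pos.2 hB
  have hs := Real.sq_sqrt (costDiscr_nonneg hB hE)
  unfold avgCostDiffNum costRoot costDiscr at *
  generalize Real.sqrt _ = s at hs ⊢
  field_simp at hs ⊢
  linear_combination hs

theorem avgCost_le_add_one_iff (hB : B < 1) (hE : 0 ≤ E) (hx : 1 ≤ x) :
    avgCost B E x ≤ avgCost B E (x + 1) ↔ costRoot B E ≤ x := by
  have ha : 0 < 1 - B := sub_pos.2 hB
  have hD : ∀ y, 1 ≤ y → 0 < B + y * (1 - B) := fun y hy => by nlinarith
  have hP : 0 < x + (1 + B) / (2 * (1 - B)) + Real.sqrt (costDiscr B E) := by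
    have : -(1 / 2) < (1 + B) / (2 * (1 - B)) := by
      rw [lt_div_iff₀ (by positivity)]
      linarith
    linarith [Real.sqrt_nonneg (costDiscr B E)]
  rw [← sub_nonneg, avgCost_add_one_sub hB.ne (hD x hx).ne' (hD (x + 1) (by linarith)).ne',
    avgCostDiffNum_eq_mul hB hE, ← sub_nonneg (b := costRoot B E), mul_div_assoc,
    mul_nonneg_iff_of_pos_left ha, le_div_iff₀ (mul_pos (hD x hx) (hD (x + 1) (by linarith))),
    zero_mul, mul_nonneg_iff_of_pos_right hP, mul_nonneg_iff_of_pos_left (half_pos ha)]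

theorem min_over_tail_general (B E : ℝ) (hB1 : B < 1) (hE : 0 < E)
    (F : ℤ → ℝ)
    (hF : ∀ k : ℤ, 1 ≤ k →
      F k = ((1 - B) / (B + k * (1 - B))) *
        ((k : ℝ) * (k - 1) / 2 + (E + k) / (1 - B) + B / (1 - B) ^ 2))
    (σ : ℝ)
    (hσ : σ = -(1 + B) / (2 * (1 - B)) +
      Real.sqrt (B ^ 2 / (1 - B) ^ 2 + (B + 2 * E) / (1 - B) + 1 / 4)) :
    ∀ δ : ℤ, 1 ≤ δ → ∀ k : ℤ, δ ≤ k → F (max δ ⌈σ⌉) ≤ F k := by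
  intro δ hδ k hk
  have hFcost : ∀ j : ℤ, 1 ≤ j → F j = avgCost B E j := hF
  have hstep : ∀ j : ℤ, 1 ≤ j → (F j ≤ F (j + 1) ↔ σ ≤ j) := fun j hj => by
    rw [hFcost j hj, hFcost (j + 1) (by omega), Int.cast_add, Int.cast_one, hσ]
    exact avgCost_le_add_one_iff hB1 hE.le (by exact_mod_cast hj)
  refine Int.apply_max_ceil_le (a := 1) (fun j hj hjσ => ?_) (fun j hj hσj => (hstep j hj).2 hσj)
    hδ hk
  exact (not_le.1 (mt (hstep j hj).1 (not_le.2 hjσ))).le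

/-- Theorem 4: over the integers `k ≥ δ`, the cost `F` is minimized at
`k_UB = max {δ, ⌈σ⌉}`. -/
theorem min_over_tail (B E : ℝ) (hB0 : 0 ≤ B) (hB1 : B < 1) (hE : 0 < E)
    (F : ℤ → ℝ)
    (hF : ∀ k : ℤ, 1 ≤ k →
      F k = ((1 - B) / (B + k * (1 - B))) *
        ((k : ℝ) * (k - 1) / 2 + (E + k) / (1 - B) + B / (1 - B) ^ 2))
    (σ : ℝ)
    (hσ : σ = -(1 + B) / (2 * (1 - B)) +
      Real.sqrt (B ^ 2 / (1 - B) ^ 2 + (B + 2 * E) / (1 - B) + 1 / 4)) :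
    ∀ δ : ℤ, 1 ≤ δ → ∀ k : ℤ, δ ≤ k → F (max δ ⌈σ⌉) ≤ F k :=
  min_over_tail_general B E hB1 hE F hF σ hσ
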